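/- arXiv:math/0111226 — 3 statements merged into one kernel-verified Lean document; each statement's English description precedes it below -/
import Mathlib

section
/- Let X and Y be locally compact Hausdorff spaces, and let f : X × Y → ℂ be a bounded function such that f(x, ·) ∈ C₀(Y) for each x ∈ X and f(·, y) ∈ C₀(X) for each y ∈ Y. Then for each regular Borel measure μ on X, the function y ↦ ∫_X f(x,y) dμ(x) belongs to C₀(Y). -/
/-!
Extending by zero to the one-point compactifications makes `X` and `Y` compact and `f` bounded and
separately continuous, and `μ` becomes a complex combination of positive functionals `p` on
`C(OnePoint X, ℝ)` (Riesz–Kantorovich). So it suffices that `y ↦ p (f (·, y))` is continuous. If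
it jumps at `η`, the bumps `u y = (|f (·, y) - f (·, η)| - δ)⁺` keep `p`-mass along an ultrafilter
`l → η`. By Cauchy–Schwarz, whenever a product `W` of bumps keeps mass against `u y` along `l`, so
does `W * u σ` for `l`-almost every `σ`. This produces points `y j` near `η` and `x i` with
`|f (x i, y j) - f (x i, η)|` at least `δ` for `j ≤ i` and below `δ / 2` for `i < j`, which is
impossible for a separately continuous function on a product of compact spaces.
-/

open Filter Topology Set Pointwise
open scoped ZeroAtInfty

theorem exists_seq_of_forall_exists {α : Type*} {Q : α → Prop} {R : α → α → Prop} {a : α}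
    (ha : Q a) (h : ∀ a, Q a → ∃ b, Q b ∧ R a b) :
    ∃ z : ℕ → α, (∀ n, Q (z n)) ∧ ∀ n, R (z n) (z (n + 1)) := by
  choose! next hnext using h
  have hQ : ∀ n, Q (next^[n] a) := fun n => by
    induction n with
    | zero => exact ha
    | succ n ih => rw [Function.iterate_succ_apply']; exact (hnext _ ih).1
  refine ⟨fun n => next^[n] a, hQ, fun n => ?_⟩
  simp only [Function.iterate_succ_apply']
  exact (hnext _ (hQ n)).2

theorem Ultrafilter.exists_pos_eventually_le_abs {α : Type*} {l : Ultrafilter α} {φ : α → ℝ}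
    (h : ¬Tendsto φ l (𝓝 0)) : ∃ c > 0, ∀ᶠ x in l, c ≤ |φ x| := by
  simp only [Metric.tendsto_nhds, Real.dist_eq, sub_zero, not_forall, exists_prop] at h
  obtain ⟨c, hc, hnot⟩ := h
  exact ⟨c, hc, (Ultrafilter.eventually_not.2 hnot).mono fun _ => le_of_not_gt⟩

theorem false_of_separatelyContinuous_triangle {S T : Type*} [TopologicalSpace S]
    [CompactSpace S] [TopologicalSpace T] [CompactSpace T] {G : S → T → ℝ}
    (hGs : ∀ s, Continuous (G s)) (hGt : ∀ t, Continuous fun s => G s t)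
    {y : ℕ → S} {x : ℕ → T} {a b : ℝ} (hba : b < a)
    (hlow : ∀ i j, j ≤ i → a ≤ G (y j) (x i)) (hup : ∀ i j, i < j → G (y j) (x i) ≤ b) :
    False := by
  set P := Ultrafilter.of (atTop : Filter ℕ)
  have hP : (P : Filter ℕ) ≤ atTop := Ultrafilter.of_le _
  obtain ⟨x', -, hx⟩ := isCompact_univ.ultrafilter_le_nhds (P.map x) (by simp)
  obtain ⟨y', -, hy⟩ := isCompact_univ.ultrafilter_le_nhds (P.map y) (by simp)
  have hx' : Tendsto x P (𝓝 x') := hx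
  have hy' : Tendsto y P (𝓝 y') := hy
  have hrow : ∀ j, a ≤ G (y j) x' := fun j =>
    ge_of_tendsto (((hGs (y j)).tendsto x').comp hx')
      ((eventually_ge_atTop j).filter_mono hP |>.mono fun i hi => hlow i j hi)
  have hcol : ∀ i, G y' (x i) ≤ b := fun i =>
    le_of_tendsto (((hGt (x i)).tendsto y').comp hy')
      ((eventually_gt_atTop i).filter_mono hP |>.mono fun j hj => hup i j hj)
  have h₁ : a ≤ G y' x' :=
    ge_of_tendsto (((hGt x').tendsto y').comp hy') (Eventually.of_forall hrow)
  have h₂ : G y' x' ≤ b :=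
    le_of_tendsto (((hGs y').tendsto x').comp hx') (Eventually.of_forall hcol)
  linarith

theorem Set.Icc_zero_add_Icc_zero {E : Type*} [AddCommGroup E] [Lattice E] [IsOrderedAddMonoid E]
    {a b : E} (ha : 0 ≤ a) (hb : 0 ≤ b) : Icc 0 a + Icc 0 b = Icc 0 (a + b) := by
  refine (Icc_add_Icc_subset _ _ _ _).trans_eq (by rw [zero_add]) |>.antisymm ?_
  rintro v ⟨hv0, hv⟩
  refine ⟨v ⊓ a, ⟨le_inf hv0 ha, inf_le_right⟩, v - v ⊓ a, ⟨sub_nonneg.2 inf_le_left, ?_⟩,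
    add_sub_cancel _ _⟩
  rw [sub_le_iff_le_add', inf_add]
  exact le_inf (le_add_of_nonneg_right hb) hv

theorem Set.Icc_zero_smul {E : Type*} [AddCommGroup E] [PartialOrder E] [Module ℝ E]
    [IsOrderedModule ℝ E] {r : ℝ} (hr : 0 < r) (a : E) : Icc 0 (r • a) = r • Icc 0 a := by
  ext v
  constructor
  · rintro ⟨hv0, hva⟩
    refine ⟨r⁻¹ • v, ⟨smul_nonneg (inv_nonneg.2 hr.le) hv0, ?_⟩, smul_inv_smul₀ hr.ne' v⟩
    rwa [← smul_le_smul_iff_of_pos_left hr, smul_inv_smul₀ hr.ne']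
  · rintro ⟨w, ⟨hw0, hwa⟩, rfl⟩
    exact ⟨smul_nonneg hr.le hw0, smul_le_smul_of_nonneg_left hwa hr.le⟩

namespace LinearMap

variable {E : Type*} [AddCommGroup E] [Lattice E] [Module ℝ E] (φ : E →ₗ[ℝ] ℝ)

noncomputable def supIcc (a : E) : ℝ :=
  sSup (φ '' Icc 0 a)

theorem le_supIcc (hφ : ∀ a, BddAbove (φ '' Icc 0 a)) {a v : E} (hv : v ∈ Icc 0 a) :
    φ v ≤ φ.supIcc a :=
  le_csSup (hφ a) (mem_image_of_mem φ hv)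

theorem supIcc_nonneg (hφ : ∀ a, BddAbove (φ '' Icc 0 a)) {a : E} (ha : 0 ≤ a) :
    0 ≤ φ.supIcc a := by
  simpa using φ.le_supIcc hφ ⟨le_rfl, ha⟩

theorem supIcc_zero : φ.supIcc 0 = 0 := by
  simp [supIcc]

theorem supIcc_add [IsOrderedAddMonoid E] (hφ : ∀ a, BddAbove (φ '' Icc 0 a)) {a b : E}
    (ha : 0 ≤ a) (hb : 0 ≤ b) : φ.supIcc (a + b) = φ.supIcc a + φ.supIcc b := by
  rw [supIcc, ← Icc_zero_add_Icc_zero ha hb, image_add]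
  exact csSup_add ((nonempty_Icc.2 ha).image φ) (hφ a) ((nonempty_Icc.2 hb).image φ) (hφ b)

theorem supIcc_smul [IsOrderedModule ℝ E] {r : ℝ} (hr : 0 ≤ r) (a : E) :
    φ.supIcc (r • a) = r * φ.supIcc a := by
  rcases hr.eq_or_lt with rfl | hr
  · simp [supIcc_zero]
  rw [supIcc, Icc_zero_smul hr, image_smul_set, Real.sSup_smul_of_nonneg hr.le, smul_eq_mul,
    supIcc]

theorem supIcc_sub_supIcc [IsOrderedAddMonoid E] (hφ : ∀ a, BddAbove (φ '' Icc 0 a))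
    {a b a' b' : E} (ha : 0 ≤ a) (hb : 0 ≤ b) (ha' : 0 ≤ a') (hb' : 0 ≤ b')
    (h : a - b = a' - b') : φ.supIcc a - φ.supIcc b = φ.supIcc a' - φ.supIcc b' := by
  have := congrArg φ.supIcc (sub_eq_sub_iff_add_eq_add.1 h)
  rw [φ.supIcc_add hφ ha hb', φ.supIcc_add hφ ha' hb] at this
  linarith

/-- Riesz–Kantorovich: `φ = φ⁺ - (φ⁺ - φ)` with `φ⁺ x = sup φ [0, x⁺] - sup φ [0, x⁻]`. -/
theorem exists_positiveLinearMap_sub [IsOrderedAddMonoid E] [IsOrderedModule ℝ E]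
    (hφ : ∀ a, BddAbove (φ '' Icc 0 a)) : ∃ p q : E →ₚ[ℝ] ℝ, ∀ x, φ x = p x - q x := by
  set P : E → ℝ := fun x => φ.supIcc x⁺ - φ.supIcc x⁻
  have hP : ∀ {a b : E}, 0 ≤ a → 0 ≤ b → P (a - b) = φ.supIcc a - φ.supIcc b := fun ha hb =>
    φ.supIcc_sub_supIcc hφ (posPart_nonneg _) (negPart_nonneg _) ha hb (posPart_sub_negPart _)
  have hPpos : ∀ {a : E}, 0 ≤ a → P a = φ.supIcc a := fun {a} ha => by
    simpa [supIcc_zero] using hP ha le_rfl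
  let P' : E →ₗ[ℝ] ℝ :=
    { toFun := P
      map_add' := fun x y => by
        have hxy : x + y = (x⁺ + y⁺) - (x⁻ + y⁻) := by
          rw [add_sub_add_comm, posPart_sub_negPart, posPart_sub_negPart]
        rw [hxy, hP (add_nonneg (posPart_nonneg x) (posPart_nonneg y))
          (add_nonneg (negPart_nonneg x) (negPart_nonneg y)), φ.supIcc_add hφ (posPart_nonneg x)
          (posPart_nonneg y), φ.supIcc_add hφ (negPart_nonneg x) (negPart_nonneg y)]
        ring
      map_smul' := fun r x => by
        rcases le_total 0 r with hr | hr
        · have hrx : r • x = r • x⁺ - r • x⁻ := by rw [← smul_sub, posPart_sub_negPart]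
          rw [hrx, hP (smul_nonneg hr (posPart_nonneg x)) (smul_nonneg hr (negPart_nonneg x)),
            φ.supIcc_smul hr, φ.supIcc_smul hr, RingHom.id_apply, smul_eq_mul, mul_sub]
        · have hr' : 0 ≤ -r := neg_nonneg.2 hr
          have hrx : r • x = (-r) • x⁻ - (-r) • x⁺ := by
            rw [← smul_sub, neg_smul, ← smul_neg, neg_sub, posPart_sub_negPart]
          rw [hrx, hP (smul_nonneg hr' (negPart_nonneg x)) (smul_nonneg hr' (posPart_nonneg x)),
            φ.supIcc_smul hr', φ.supIcc_smul hr', RingHom.id_apply, smul_eq_mul]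
          ring }
  have hP'pos : ∀ a, 0 ≤ a → 0 ≤ P' a := fun a ha => by
    change 0 ≤ P a
    exact hPpos ha ▸ φ.supIcc_nonneg hφ ha
  have hP'ge : ∀ a, 0 ≤ a → 0 ≤ (P' - φ) a := fun a ha => by
    change 0 ≤ P a - φ a
    exact hPpos ha ▸ sub_nonneg.2 (φ.le_supIcc hφ ⟨ha, le_rfl⟩)
  exact ⟨.mk₀ P' hP'pos, .mk₀ (P' - φ) hP'ge, fun x => (sub_sub_cancel (P' x) (φ x)).symm⟩

end LinearMap

theorem ContinuousMap.exists_bump {T : Type*} [TopologicalSpace T] (g : C(T, ℝ)) {B δ : ℝ}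
    (hB : 0 < B) (hg : ∀ t, |g t| ≤ B) (hδ : 0 ≤ δ) :
    ∃ u : C(T, ℝ), 0 ≤ u ∧ u ≤ 1 ∧ (∀ t, 0 < u t → δ < |g t|) ∧ |g| ≤ δ • 1 + B • u := by
  refine ⟨⟨fun t => max (|g t| - δ) 0 / B, by fun_prop⟩,
    fun t => div_nonneg (le_max_right _ _) hB.le,
    fun t => div_le_one_of_le₀ (max_le (by linarith [hg t]) hB.le) hB.le, fun t ht => ?_,
    fun t => ?_⟩
  · by_contra! H
    simp [max_eq_right (sub_nonpos.2 H)] at ht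
  · change |g t| ≤ δ * 1 + B * (max (|g t| - δ) 0 / B)
    rw [mul_div_cancel₀ _ hB.ne']
    linarith [le_max_left (|g t| - δ) 0]

namespace PositiveLinearMap

open Finset

variable {T : Type*} [TopologicalSpace T] (p : C(T, ℝ) →ₚ[ℝ] ℝ)

theorem sq_apply_mul_le {w : C(T, ℝ)} (hw : 0 ≤ w) (v : C(T, ℝ)) :
    p (v * w) ^ 2 ≤ p (v * v * w) * p w := by
  have hquad : ∀ t : ℝ, 0 ≤ p w * (t * t) + (-2 * p (v * w)) * t + p (v * v * w) := fun t => by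
    have h : 0 ≤ (v - t • 1) * (v - t • 1) * w :=
      mul_nonneg (fun x => mul_self_nonneg ((v - t • 1) x)) hw
    have hexp : (v - t • 1) * (v - t • 1) * w = (t * t) • w + (-2 * t) • (v * w) + v * v * w := by
      simp only [Algebra.smul_def, map_mul, map_neg, map_ofNat]; ring
    have := p.map_nonneg h
    rw [hexp, map_add, map_add, map_smul, map_smul, smul_eq_mul, smul_eq_mul] at this
    linarith
  have := discrim_le_zero hquad
  rw [discrim] at this
  nlinarith

theorem sq_sum_apply_mul_le {ι : Type*} {W : C(T, ℝ)} (hW : 0 ≤ W) {u : ι → C(T, ℝ)}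
    (hu0 : ∀ i, 0 ≤ u i) (hu1 : ∀ i, u i ≤ 1) (s : Finset ι) {γ : ℝ} (hγ : 0 ≤ γ)
    (hsmall : ∀ i ∈ s, ∀ j ∈ s, i ≠ j → p (W * u i * u j) ≤ γ) :
    (∑ i ∈ s, p (W * u i)) ^ 2 ≤ (#s * p W + #s ^ 2 * γ) * p W := by
  classical
  set v := ∑ i ∈ s, u i
  have hvW : p (v * W) = ∑ i ∈ s, p (W * u i) := by
    rw [Finset.sum_mul, map_sum]
    simp only [mul_comm]
  have hterm : ∀ i ∈ s, ∀ j ∈ s, p (W * u i * u j) ≤ (if i = j then p W else 0) + γ := by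
    intro i hi j hj
    split_ifs with hij
    · subst hij
      have : W * u i * u i ≤ W := by
        rw [mul_assoc]
        exact mul_le_of_le_one_right hW (mul_le_one₀ (hu1 i) (hu0 i) (hu1 i))
      linarith [OrderHomClass.mono p this]
    · simpa using hsmall i hi j hj hij
  have hvvW : p (v * v * W) ≤ #s * p W + #s ^ 2 * γ := calc
    p (v * v * W) = ∑ i ∈ s, ∑ j ∈ s, p (W * u i * u j) := by
      rw [Finset.sum_mul_sum, Finset.sum_mul, map_sum]
      refine Finset.sum_congr rfl fun i _ => ?_
      rw [Finset.sum_mul, map_sum]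
      exact Finset.sum_congr rfl fun j _ => by ring_nf
    _ ≤ ∑ i ∈ s, ∑ j ∈ s, ((if i = j then p W else 0) + γ) :=
      Finset.sum_le_sum fun i hi => Finset.sum_le_sum fun j hj => hterm i hi j hj
    _ = #s * p W + #s ^ 2 * γ := by
      simp only [sum_add_distrib, sum_ite_eq, sum_const, nsmul_eq_mul, sum_ite_mem,
        Finset.inter_self, add_right_inj]
      ring
  calc (∑ i ∈ s, p (W * u i)) ^ 2 = p (v * W) ^ 2 := by rw [hvW]
    _ ≤ p (v * v * W) * p W := p.sq_apply_mul_le hW v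
    _ ≤ _ := mul_le_mul_of_nonneg_right hvvW (p.map_nonneg hW)

variable {S : Type*}

/-- Otherwise `k` almost orthogonal `u σ` would make `p (W * ∑ u σ)` grow like `k`, while
Cauchy–Schwarz only allows `√k`. -/
theorem eventually_not_tendsto_apply_mul_mul (l : Ultrafilter S) {W : C(T, ℝ)} (hW : 0 ≤ W)
    {u : S → C(T, ℝ)} (hu0 : ∀ s, 0 ≤ u s) (hu1 : ∀ s, u s ≤ 1)
    (h : ¬Tendsto (fun s => p (W * u s)) l (𝓝 0)) :
    ∀ᶠ σ in l, ¬Tendsto (fun s => p (W * u σ * u s)) l (𝓝 0) := by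
  obtain ⟨c, hc, hlow⟩ := Ultrafilter.exists_pos_eventually_le_abs h
  simp only [abs_of_nonneg (p.map_nonneg (mul_nonneg hW (hu0 _)))] at hlow
  by_contra hcon
  rw [← Ultrafilter.eventually_not] at hcon
  simp only [not_not] at hcon
  set M := p W
  have hcM : c ≤ M := by
    obtain ⟨s, hs⟩ := hlow.exists
    exact hs.trans (OrderHomClass.mono p (mul_le_of_le_one_right hW (hu1 s)))
  have hM : 0 < M := hc.trans_le hcM
  set γ := c ^ 2 / (2 * M)
  have hγ : 0 < γ := by positivity
  obtain ⟨f, hf, hfγ⟩ := exists_seq_of_forall_finset_exists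
    (fun s => c ≤ p (W * u s) ∧ Tendsto (fun s' => p (W * u s * u s')) l (𝓝 0))
    (fun s s' => p (W * u s * u s') ≤ γ) fun F hF =>
      ((hlow.and hcon).and ((eventually_all_finset F).2 fun s hs =>
        ((tendsto_order.1 (hF s hs).2).2 γ hγ).mono fun _ => le_of_lt)).exists
  obtain ⟨k, hk⟩ := exists_nat_gt (2 * M ^ 2 / c ^ 2)
  have hsq := p.sq_sum_apply_mul_le hW (u := u ∘ f) (fun _ => hu0 _) (fun _ => hu1 _) (range k)
    hγ.le fun i _ j _ hij => by
      rcases hij.lt_or_gt with hij | hij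
      · exact hfγ i j hij
      · simpa only [Function.comp, mul_right_comm] using hfγ j i hij
  have hsum : k * c ≤ ∑ i ∈ range k, p (W * u (f i)) := by
    simpa using Finset.card_nsmul_le_sum (range k) _ c fun i _ => (hf i).1
  have hk0 : (0 : ℝ) < k := (by positivity : (0 : ℝ) ≤ 2 * M ^ 2 / c ^ 2).trans_lt hk
  have hγM : γ * M = c ^ 2 / 2 := by simp only [γ]; field_simp
  have : (k * c) ^ 2 ≤ (k * M + k ^ 2 * γ) * M := by
    simp only [card_range, Function.comp] at hsq
    exact (pow_le_pow_left₀ (by positivity) hsum 2).trans hsq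
  rw [div_lt_iff₀ (by positivity)] at hk
  nlinarith [mul_lt_mul_of_pos_left hk hk0]

/-- The state `(W n, U n)` has `W n = u (y 0) * ⋯ * u (y (n - 1))` still carrying mass along `l`
and `U n = ⋂ i < n, N (x i)`; then `y n ∈ U n` and `x n` is any point where `W (n + 1) > 0`. -/
theorem exists_seq_pos_of_not_tendsto (l : Ultrafilter S) {u : S → C(T, ℝ)}
    (hu0 : ∀ s, 0 ≤ u s) (hu1 : ∀ s, u s ≤ 1) {N : T → Set S} (hN : ∀ t, N t ∈ l)
    (h : ¬Tendsto (fun s => p (u s)) l (𝓝 0)) :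
    ∃ (y : ℕ → S) (x : ℕ → T),
      (∀ i j, j ≤ i → 0 < u (y j) (x i)) ∧ ∀ i j, i < j → y j ∈ N (x i) := by
  let Q : C(T, ℝ) × Set S → Prop := fun a =>
    0 ≤ a.1 ∧ a.1 ≤ 1 ∧ a.2 ∈ l ∧ ¬Tendsto (fun s => p (a.1 * u s)) l (𝓝 0)
  let R : C(T, ℝ) × Set S → C(T, ℝ) × Set S → Prop := fun a b =>
    ∃ σ τ, σ ∈ a.2 ∧ 0 < b.1 τ ∧ b = (a.1 * u σ, a.2 ∩ N τ)
  have hQ : Q (1, univ) := ⟨zero_le_one, le_rfl, univ_mem, by simpa using h⟩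
  have hstep : ∀ a, Q a → ∃ b, Q b ∧ R a b := by
    rintro ⟨W, U⟩ ⟨hW0, hW1, hU, hW⟩
    obtain ⟨σ, hσ, hσU⟩ :=
      ((p.eventually_not_tendsto_apply_mul_mul l hW0 hu0 hu1 hW).and hU).exists
    obtain ⟨τ, hτ⟩ : ∃ τ, 0 < (W * u σ) τ := by
      by_contra! H
      have : W * u σ = 0 := le_antisymm H (mul_nonneg hW0 (hu0 σ))
      exact hσ (by simp [this])
    exact ⟨(W * u σ, U ∩ N τ), ⟨mul_nonneg hW0 (hu0 σ), mul_le_one₀ hW1 (hu0 σ) (hu1 σ),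
      inter_mem hU (hN τ), hσ⟩, σ, τ, hσU, hτ, rfl⟩
  obtain ⟨z, hzQ, hzR⟩ := exists_seq_of_forall_exists hQ hstep
  choose y x hyU hx hz using hzR
  have hW : Antitone fun n => (z n).1 := antitone_nat_of_succ_le fun n => by
    rw [hz n]; exact mul_le_of_le_one_right (hzQ n).1 (hu1 _)
  have hU : Antitone fun n => (z n).2 := antitone_nat_of_succ_le fun n => by
    rw [hz n]; exact inter_subset_left
  refine ⟨y, x, fun i j hji => ?_, fun i j hij => ?_⟩
  · calc 0 < (z (i + 1)).1 (x i) := hx i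
      _ ≤ (z (j + 1)).1 (x i) := hW (Nat.succ_le_succ hji) (x i)
      _ ≤ u (y j) (x i) := by
        rw [hz j]; exact mul_le_of_le_one_left (hu0 _) (hzQ j).2.1 (x i)
  · have : y j ∈ (z (i + 1)).2 := hU (Nat.succ_le_of_lt hij) (hyU j)
    rw [hz i] at this
    exact this.2

theorem abs_apply_le_apply_abs (g : C(T, ℝ)) : |p g| ≤ p |g| :=
  abs_le.2 ⟨by simpa using OrderHomClass.mono p (neg_le.1 (neg_le_abs g)),
    OrderHomClass.mono p (le_abs_self g)⟩

theorem continuous_apply_of_separatelyContinuous [CompactSpace T] [TopologicalSpace S]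
    [CompactSpace S] {F : S → C(T, ℝ)} (hF : ∀ t, Continuous fun s => F s t) {C : ℝ}
    (hC : ∀ s, ‖F s‖ ≤ C) : Continuous fun s => p (F s) := by
  refine continuous_iff_continuousAt.2 fun η => ?_
  by_contra hη
  simp only [ContinuousAt, Metric.tendsto_nhds, Real.dist_eq, not_forall, not_eventually,
    not_lt, exists_prop] at hη
  obtain ⟨ε, hε, hbad⟩ := hη
  have := frequently_iff_neBot.1 hbad
  set l := Ultrafilter.of (𝓝 η ⊓ 𝓟 {s | ε ≤ |p (F s) - p (F η)|})
  have hlη : (l : Filter S) ≤ 𝓝 η := (Ultrafilter.of_le _).trans inf_le_left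
  have hlbad : ∀ᶠ s in l, ε ≤ |p (F s) - p (F η)| :=
    (Ultrafilter.of_le _) (mem_inf_of_right (mem_principal_self _))
  obtain ⟨δ, hδ, hδε⟩ := exists_pos_mul_lt hε (p 1)
  set B := 2 * C + 1
  have hB : 0 < B := by linarith [(norm_nonneg _).trans (hC η)]
  have hdiff : ∀ s t, |(F s - F η) t| ≤ B := fun s t => by
    have := (F s - F η).norm_coe_le_norm t
    rw [Real.norm_eq_abs] at this
    linarith [norm_sub_le (F s) (F η), hC s, hC η]
  choose u hu0 hu1 hupos hdom using fun s => (F s - F η).exists_bump hB (hdiff s) hδ.le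
  have hmass : ∀ᶠ s in l, ε - p 1 * δ ≤ B * p (u s) := hlbad.mono fun s hs => by
    have := (p.abs_apply_le_apply_abs _).trans (OrderHomClass.mono p (hdom s))
    rw [map_sub, map_add, map_smul, map_smul, smul_eq_mul, smul_eq_mul] at this
    linarith
  have hu : ¬Tendsto (fun s => p (u s)) l (𝓝 0) := fun h => by
    obtain ⟨s, hs, hs'⟩ := (hmass.and ((tendsto_order.1 h).2 _
      (div_pos (sub_pos.2 hδε) hB))).exists
    rw [lt_div_iff₀ hB] at hs'
    linarith
  have hN : ∀ t, {s | |F s t - F η t| < δ / 2} ∈ l := fun t =>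
    hlη <| (((hF t).sub continuous_const).abs.continuousAt.eventually_lt continuousAt_const
      (by simpa using half_pos hδ))
  obtain ⟨y, x, hpos, hnear⟩ := p.exists_seq_pos_of_not_tendsto l hu0 hu1 hN hu
  exact false_of_separatelyContinuous_triangle (G := fun s t => |F s t - F η t|)
    (fun s => by fun_prop) (fun t => ((hF t).sub continuous_const).abs) (half_lt_self hδ)
    (fun i j hji => (hupos _ _ (hpos i j hji)).le) fun i j hij => (hnear i j hij).le

end PositiveLinearMap

namespace ContinuousLinearMap

variable {S T : Type*} [TopologicalSpace S] [CompactSpace S] [TopologicalSpace T]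
  [CompactSpace T]

theorem bddAbove_image_Icc (φ : C(T, ℝ) →L[ℝ] ℝ) (a : C(T, ℝ)) :
    BddAbove ((φ : C(T, ℝ) →ₗ[ℝ] ℝ) '' Icc 0 a) := by
  refine ⟨‖φ‖ * ‖a‖, ?_⟩
  rintro _ ⟨v, ⟨hv0, hva⟩, rfl⟩
  have hv : ‖v‖ ≤ ‖a‖ := (ContinuousMap.norm_le v (norm_nonneg a)).2 fun t => by
    have hvt : 0 ≤ v t := hv0 t
    rw [Real.norm_eq_abs, abs_of_nonneg hvt]
    exact (hva t).trans ((le_abs_self _).trans (by simpa using a.norm_coe_le_norm t))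
  exact (le_abs_self _).trans ((φ.le_opNorm v).trans (by gcongr))

theorem continuous_apply_of_separatelyContinuous_real (φ : C(T, ℝ) →L[ℝ] ℝ)
    {F : S → C(T, ℝ)} (hF : ∀ t, Continuous fun s => F s t) {C : ℝ} (hC : ∀ s, ‖F s‖ ≤ C) :
    Continuous fun s => φ (F s) := by
  obtain ⟨p, q, hpq⟩ :=
    (φ : C(T, ℝ) →ₗ[ℝ] ℝ).exists_positiveLinearMap_sub φ.bddAbove_image_Icc
  simp only [← coe_coe, hpq]
  exact (p.continuous_apply_of_separatelyContinuous hF hC).sub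
    (q.continuous_apply_of_separatelyContinuous hF hC)

theorem continuous_apply_of_separatelyContinuous (φ : C(T, ℂ) →L[ℝ] ℂ) {F : S → C(T, ℂ)}
    (hF : ∀ t, Continuous fun s => F s t) {C : ℝ} (hC : ∀ s, ‖F s‖ ≤ C) :
    Continuous fun s => φ (F s) := by
  have hreal : ∀ (ψ : C(T, ℝ) →L[ℝ] ℂ) {G : S → C(T, ℝ)}, (∀ t, Continuous fun s => G s t) →
      (∀ s, ‖G s‖ ≤ C) → Continuous fun s => ψ (G s) := fun ψ G hG hGC => by
    have hre := (Complex.reCLM.comp ψ).continuous_apply_of_separatelyContinuous_real hG hGC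
    have him := (Complex.imCLM.comp ψ).continuous_apply_of_separatelyContinuous_real hG hGC
    refine ((Complex.continuous_ofReal.comp hre).add
      ((Complex.continuous_ofReal.comp him).mul (continuous_const (y := Complex.I)))).congr
      fun s => ?_
    simp [Complex.re_add_im]
  have hpart : ∀ L : ℂ →L[ℝ] ℝ, ‖L‖ ≤ 1 → ∀ s, ‖L.compLeftContinuous ℝ T (F s)‖ ≤ C :=
    fun L hL s => (ContinuousMap.norm_le _ ((norm_nonneg _).trans (hC s))).2 fun t =>
      (L.le_of_opNorm_le hL _).trans (by simpa using ((F s).norm_coe_le_norm t).trans (hC s))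
  set ι := Complex.ofRealCLM.compLeftContinuous ℝ T
  set re := Complex.reCLM.compLeftContinuous ℝ T
  set im := Complex.imCLM.compLeftContinuous ℝ T
  have hre := hreal (φ.comp ι) (G := fun s => re (F s))
    (fun t => Complex.continuous_re.comp (hF t)) (hpart _ Complex.reCLM_norm.le)
  have him := hreal (φ.comp (Complex.I • ι)) (G := fun s => im (F s))
    (fun t => Complex.continuous_im.comp (hF t)) (hpart _ Complex.imCLM_norm.le)
  refine (hre.add him).congr fun s => ?_
  simp only [Pi.add_apply, comp_apply, ← map_add]
  congr 1
  ext t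
  simp [ι, re, im, mul_comm Complex.I, Complex.re_add_im]

end ContinuousLinearMap

namespace ZeroAtInftyContinuousMap

variable {Z β : Type*} [TopologicalSpace Z]

def toOnePoint [T2Space Z] [TopologicalSpace β] [Zero β] (f : C₀(Z, β)) : C(OnePoint Z, β) :=
  OnePoint.continuousMapMk f 0 (coclosedCompact_eq_cocompact (X := Z) ▸ zero_at_infty f)

@[simp]
theorem toOnePoint_coe [T2Space Z] [TopologicalSpace β] [Zero β] (f : C₀(Z, β)) (x : Z) :
    f.toOnePoint x = f x :=
  rfl

@[simp]
theorem toOnePoint_infty [T2Space Z] [TopologicalSpace β] [Zero β] (f : C₀(Z, β)) :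
    f.toOnePoint OnePoint.infty = 0 :=
  rfl

theorem norm_le_of_forall [SeminormedAddCommGroup β] (f : C₀(Z, β)) {C : ℝ} (hC : 0 ≤ C)
    (h : ∀ x, ‖f x‖ ≤ C) : ‖f‖ ≤ C :=
  norm_toBCF_eq_norm (f := f) ▸ (BoundedContinuousFunction.norm_le hC).2 h

end ZeroAtInftyContinuousMap

namespace OnePoint

variable {Z β 𝕜 : Type*} [TopologicalSpace Z] [T2Space Z] [NormedField 𝕜]
  [NormedAddCommGroup β] [NormedSpace 𝕜 β]

noncomputable def toZeroAtInftyCLM : C(OnePoint Z, β) →L[𝕜] C₀(Z, β) :=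
  LinearMap.mkContinuous
    { toFun := fun a =>
        ⟨⟨fun x => a x - a ∞, (a.continuous.comp continuous_coe).sub continuous_const⟩, by
          simpa [coclosedCompact_eq_cocompact] using
            ((a.continuous.tendsto ∞).comp tendsto_coe_infty).sub_const (a ∞)⟩
      map_add' := fun a b => by
        ext x
        simp only [ContinuousMap.add_apply, ZeroAtInftyContinuousMap.coe_mk,
          ZeroAtInftyContinuousMap.coe_add, Pi.add_apply]
        abel
      map_smul' := fun c a => by ext x; simp [smul_sub] }
    2 fun a => ZeroAtInftyContinuousMap.norm_le_of_forall _ (by positivity) fun x =>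
      (norm_sub_le _ _).trans (by linarith [a.norm_coe_le_norm x, a.norm_coe_le_norm ∞])

@[simp]
theorem toZeroAtInftyCLM_apply (a : C(OnePoint Z, β)) (x : Z) :
    toZeroAtInftyCLM (𝕜 := 𝕜) a x = a x - a ∞ :=
  rfl

@[simp]
theorem toZeroAtInftyCLM_toOnePoint (f : C₀(Z, β)) :
    toZeroAtInftyCLM (𝕜 := 𝕜) f.toOnePoint = f := by
  ext x
  simp

end OnePoint

namespace ZeroAtInftyContinuousMap

variable {X Y β : Type*} [TopologicalSpace X] [T2Space X]

def onePointFamily [TopologicalSpace β] [Zero β] (F : Y → C₀(X, β)) :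
    OnePoint Y → C(OnePoint X, β) :=
  fun s => s.elim 0 fun y => (F y).toOnePoint

theorem continuous_onePointFamily_apply [TopologicalSpace Y] [T2Space Y] [TopologicalSpace β]
    [Zero β] {F : Y → C₀(X, β)} (Fx : X → C₀(Y, β)) (h : ∀ x y, F y x = Fx x y) (t : OnePoint X) :
    Continuous fun s => onePointFamily F s t := by
  induction t using OnePoint.rec with
  | infty =>
    convert continuous_const (y := (0 : β)) with s
    induction s using OnePoint.rec <;> rfl
  | coe x =>
    convert (Fx x).toOnePoint.continuous with s
    induction s using OnePoint.rec with
    | infty => rfl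
    | coe y => exact h x y

theorem norm_onePointFamily_le [NormedAddCommGroup β] {F : Y → C₀(X, β)} {C : ℝ} (hC : 0 ≤ C)
    (h : ∀ y x, ‖F y x‖ ≤ C) (s : OnePoint Y) : ‖onePointFamily F s‖ ≤ C := by
  refine (ContinuousMap.norm_le _ hC).2 fun t => ?_
  induction s using OnePoint.rec with
  | infty => simpa [onePointFamily] using hC
  | coe y =>
    induction t using OnePoint.rec with
    | infty => simpa [onePointFamily] using hC
    | coe x => simpa [onePointFamily] using h y x

end ZeroAtInftyContinuousMap

theorem sepC0_integral_first_variable_general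
    {X Y : Type*} [TopologicalSpace X] [T2Space X]
    [TopologicalSpace Y] [T2Space Y]
    (f : X × Y → ℂ) (hbdd : ∃ C : ℝ, ∀ p, ‖f p‖ ≤ C)
    (F : Y → C₀(X, ℂ)) (hF : ∀ x y, F y x = f (x, y))
    (Fx : X → C₀(Y, ℂ)) (hFx : ∀ x y, Fx x y = f (x, y))
    (μ : C₀(X, ℂ) →L[ℂ] ℂ) :
    ∃ g : C₀(Y, ℂ), ∀ y, g y = μ (F y) := by
  obtain ⟨C, hC⟩ := hbdd
  set φ : C(OnePoint X, ℂ) →L[ℝ] ℂ := (μ.comp OnePoint.toZeroAtInftyCLM).restrictScalars ℝ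
  have hcont : Continuous fun s => φ (ZeroAtInftyContinuousMap.onePointFamily F s) :=
    φ.continuous_apply_of_separatelyContinuous
      (ZeroAtInftyContinuousMap.continuous_onePointFamily_apply Fx fun x y => by rw [hF, hFx])
      (ZeroAtInftyContinuousMap.norm_onePointFamily_le (le_max_right C 0) fun y x => by
        rw [hF]; exact (hC _).trans (le_max_left _ _))
  refine ⟨OnePoint.toZeroAtInftyCLM (𝕜 := ℂ) ⟨_, hcont⟩, fun y => ?_⟩
  simp [φ, ZeroAtInftyContinuousMap.onePointFamily]

/-- Let `X`, `Y` be locally compact Hausdorff spaces and let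
`f : X × Y → ℂ` be a bounded, separately `C₀` function (witnessed by the slice
families `F` and `Fx`).  Identifying a regular Borel measure `μ` on `X` with a
bounded linear functional on `C₀(X, ℂ)` (Riesz representation), the function
`y ↦ ∫_X f(x, y) dμ(x) = μ (f (·, y))` belongs to `C₀(Y, ℂ)`. -/
theorem sepC0_integral_first_variable
    {X Y : Type*} [TopologicalSpace X] [LocallyCompactSpace X] [T2Space X]
    [TopologicalSpace Y] [LocallyCompactSpace Y] [T2Space Y]
    (f : X × Y → ℂ) (hbdd : ∃ C : ℝ, ∀ p, ‖f p‖ ≤ C)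
    (F : Y → C₀(X, ℂ)) (hF : ∀ x y, F y x = f (x, y))
    (Fx : X → C₀(Y, ℂ)) (hFx : ∀ x y, Fx x y = f (x, y))
    (μ : C₀(X, ℂ) →L[ℂ] ℂ) :
    ∃ g : C₀(Y, ℂ), ∀ y, g y = μ (F y) :=
  sepC0_integral_first_variable_general f hbdd F hF Fx hFx μ
end

section
/- Let X and Y be locally compact Hausdorff spaces, and let Φ : M(X) × M(Y) → ℂ be a bounded bilinear map that is weak*-continuous in each variable separately. Then the function f(x,y) := Φ(δ_x, δ_y) is a bounded separately C₀ function on X × Y, and Φ(μ,ν) = ∫_Y ∫_X f(x,y) dμ(x) dν(y) for all μ ∈ M(X), ν ∈ M(Y). Moreover ‖Φ‖ = sup_{x,y} |f(x,y)|. -/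
/-!
A weak*-continuous linear functional on the dual of a normed space is evaluation at a vector
(`LinearMap.dualEmbedding_surjective`). Applied to the partial maps of `Φ`, this gives
`Φ(μ, ν) = ν(g_μ)` with `g_μ(y) = Φ(μ, δ_y) = μ(h_y)`, where `h_y(x) = Φ(δ_x, δ_y)`: this is the
iterated integral, and `‖g_μ‖ ≤ ‖μ‖ · sup_y ‖h_y‖` gives the bound `‖Φ‖ ≤ sup |f|`; the reverse
bound holds because Dirac functionals have norm at most one.
-/

open scoped ZeroAtInfty

/-- A bounded function `f : X × Y → ℂ` is separately `C₀` if all its slices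
`f(x, ·)` and `f(·, y)` vanish at infinity. -/
def IsSepC0 {X Y : Type*} [TopologicalSpace X] [TopologicalSpace Y]
    (f : X × Y → ℂ) : Prop :=
  (∃ C : ℝ, ∀ p, ‖f p‖ ≤ C) ∧
    (∀ x, ∃ g : C₀(Y, ℂ), ∀ y, g y = f (x, y)) ∧
    (∀ y, ∃ g : C₀(X, ℂ), ∀ x, g x = f (x, y))

namespace ZeroAtInftyContinuousMap

variable {X β : Type*} [TopologicalSpace X] [SeminormedAddCommGroup β]

theorem norm_coe_le_norm (f : C₀(X, β)) (x : X) : ‖f x‖ ≤ ‖f‖ := by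
  rw [← norm_toBCF_eq_norm]
  exact f.toBCF.norm_coe_le_norm x

theorem norm_le {f : C₀(X, β)} {C : ℝ} (hC : 0 ≤ C) : ‖f‖ ≤ C ↔ ∀ x, ‖f x‖ ≤ C := by
  rw [← norm_toBCF_eq_norm]
  exact BoundedContinuousFunction.norm_le hC

end ZeroAtInftyContinuousMap

namespace WeakDual

open ZeroAtInftyContinuousMap

variable {𝕜 : Type*} [NontriviallyNormedField 𝕜]

theorem exists_eq_apply_of_continuous {E : Type*} [AddCommGroup E] [TopologicalSpace E]
    [Module 𝕜 E] [ContinuousConstSMul 𝕜 E] [ContinuousAdd E]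
    (φ : WeakDual 𝕜 E →ₗ[𝕜] 𝕜) (hφ : Continuous φ) : ∃ g : E, ∀ μ : WeakDual 𝕜 E, φ μ = μ g := by
  obtain ⟨g, hg⟩ := LinearMap.dualEmbedding_surjective (topDualPairing 𝕜 E) ⟨φ, hφ⟩
  exact ⟨g, fun μ => (congr($hg μ)).symm⟩

variable {X Y : Type*} [TopologicalSpace X] [TopologicalSpace Y]

theorem norm_toStrongDual_le_one_of_apply_eq_eval {δ : WeakDual 𝕜 C₀(X, 𝕜)} {x : X}
    (hδ : ∀ g, δ g = g x) : ‖toStrongDual δ‖ ≤ 1 :=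
  ContinuousLinearMap.opNorm_le_bound _ zero_le_one fun g => by
    rw [one_mul, toStrongDual_apply, hδ]
    exact norm_coe_le_norm g x

section Functional

variable {d : X → WeakDual 𝕜 C₀(X, 𝕜)} {φ : WeakDual 𝕜 C₀(X, 𝕜) →ₗ[𝕜] 𝕜}

theorem exists_zeroAtInfty_eq_apply_dirac (hd : ∀ x g, d x g = g x) (hφ : Continuous φ) :
    ∃ g : C₀(X, 𝕜), ∀ x, g x = φ (d x) := by
  obtain ⟨g, hg⟩ := exists_eq_apply_of_continuous φ hφ
  exact ⟨g, fun x => by rw [hg, hd]⟩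

theorem apply_eq_of_forall_eq_apply_dirac (hd : ∀ x g, d x g = g x) (hφ : Continuous φ)
    {g : C₀(X, 𝕜)} (hg : ∀ x, g x = φ (d x)) (μ : WeakDual 𝕜 C₀(X, 𝕜)) : φ μ = μ g := by
  obtain ⟨g', hg'⟩ := exists_eq_apply_of_continuous φ hφ
  have : g' = g := ext fun x => by rw [hg, hg', hd]
  rw [hg', this]

theorem norm_apply_le_of_forall_norm_apply_dirac_le (hd : ∀ x g, d x g = g x)
    (hφ : Continuous φ) {C : ℝ} (hC : 0 ≤ C) (hφC : ∀ x, ‖φ (d x)‖ ≤ C)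
    (μ : WeakDual 𝕜 C₀(X, 𝕜)) : ‖φ μ‖ ≤ ‖toStrongDual μ‖ * C := by
  obtain ⟨g, hg⟩ := exists_zeroAtInfty_eq_apply_dirac hd hφ
  have hgC : ‖g‖ ≤ C := (norm_le hC).2 fun x => hg x ▸ hφC x
  calc ‖φ μ‖ = ‖toStrongDual μ g‖ := by rw [apply_eq_of_forall_eq_apply_dirac hd hφ hg]; rfl
    _ ≤ ‖toStrongDual μ‖ * ‖g‖ := (toStrongDual μ).le_opNorm g
    _ ≤ ‖toStrongDual μ‖ * C := by gcongr

end Functional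

section Bilinear

variable {B : WeakDual 𝕜 C₀(X, 𝕜) →ₗ[𝕜] WeakDual 𝕜 C₀(Y, 𝕜) →ₗ[𝕜] 𝕜}
  {dX : X → WeakDual 𝕜 C₀(X, 𝕜)} {dY : Y → WeakDual 𝕜 C₀(Y, 𝕜)}

theorem norm_bilinear_apply_dirac_le_max (hdX : ∀ x g, dX x g = g x)
    (hdY : ∀ y g, dY y g = g y) {C : ℝ}
    (hB : ∀ μ ν, ‖B μ ν‖ ≤ C * ‖toStrongDual μ‖ * ‖toStrongDual ν‖) (x : X) (y : Y) :
    ‖B (dX x) (dY y)‖ ≤ max C 0 := by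
  have hx := norm_toStrongDual_le_one_of_apply_eq_eval (hdX x)
  have hy := norm_toStrongDual_le_one_of_apply_eq_eval (hdY y)
  calc ‖B (dX x) (dY y)‖ ≤ C * ‖toStrongDual (dX x)‖ * ‖toStrongDual (dY y)‖ := hB _ _
    _ ≤ max C 0 * ‖toStrongDual (dX x)‖ * ‖toStrongDual (dY y)‖ := by
      gcongr
      exact le_max_left C 0
    _ ≤ max C 0 * 1 * 1 := by gcongr
    _ = max C 0 := by ring

theorem bilinear_apply_eq_iterated (hB₁ : ∀ ν, Continuous fun μ => B μ ν)
    (hB₂ : ∀ μ, Continuous (B μ)) (hdX : ∀ x g, dX x g = g x) (hdY : ∀ y g, dY y g = g y)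
    {μ : WeakDual 𝕜 C₀(X, 𝕜)} {F : Y → C₀(X, 𝕜)} {g : C₀(Y, 𝕜)}
    (hF : ∀ x y, F y x = B (dX x) (dY y)) (hg : ∀ y, g y = μ (F y))
    (ν : WeakDual 𝕜 C₀(Y, 𝕜)) : B μ ν = ν g := by
  have hslice (y : Y) : B μ (dY y) = μ (F y) :=
    apply_eq_of_forall_eq_apply_dirac hdX (φ := B.flip (dY y)) (hB₁ _) (fun x => hF x y) μ
  exact apply_eq_of_forall_eq_apply_dirac hdY (hB₂ μ) (fun y => (hg y).trans (hslice y).symm) ν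

theorem norm_bilinear_apply_le_of_forall_norm_apply_dirac_le
    (hB₁ : ∀ ν, Continuous fun μ => B μ ν) (hB₂ : ∀ μ, Continuous (B μ))
    (hdX : ∀ x g, dX x g = g x) (hdY : ∀ y g, dY y g = g y) {C : ℝ} (hC : 0 ≤ C)
    (hBC : ∀ x y, ‖B (dX x) (dY y)‖ ≤ C) (μ : WeakDual 𝕜 C₀(X, 𝕜))
    (ν : WeakDual 𝕜 C₀(Y, 𝕜)) : ‖B μ ν‖ ≤ C * ‖toStrongDual μ‖ * ‖toStrongDual ν‖ := by
  have hμ (y : Y) : ‖B μ (dY y)‖ ≤ ‖toStrongDual μ‖ * C :=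
    norm_apply_le_of_forall_norm_apply_dirac_le hdX (φ := B.flip (dY y)) (hB₁ _) hC
      (fun x => hBC x y) μ
  calc ‖B μ ν‖ ≤ ‖toStrongDual ν‖ * (‖toStrongDual μ‖ * C) :=
        norm_apply_le_of_forall_norm_apply_dirac_le hdY (hB₂ μ) (by positivity) hμ ν
    _ = C * ‖toStrongDual μ‖ * ‖toStrongDual ν‖ := by ring

end Bilinear

end WeakDual

theorem sepWeakStarBilinear_eq_integral_general
    {X Y : Type*} [TopologicalSpace X] [TopologicalSpace Y]
    (Φ : WeakDual ℂ C₀(X, ℂ) → WeakDual ℂ C₀(Y, ℂ) → ℂ)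
    (hadd₁ : ∀ μ₁ μ₂ ν, Φ (μ₁ + μ₂) ν = Φ μ₁ ν + Φ μ₂ ν)
    (hsmul₁ : ∀ (c : ℂ) μ ν, Φ (c • μ) ν = c * Φ μ ν)
    (hadd₂ : ∀ μ ν₁ ν₂, Φ μ (ν₁ + ν₂) = Φ μ ν₁ + Φ μ ν₂)
    (hsmul₂ : ∀ (c : ℂ) μ ν, Φ μ (c • ν) = c * Φ μ ν)
    (hbdd : ∃ C : ℝ, ∀ μ ν, ‖Φ μ ν‖ ≤
      C * ‖WeakDual.toStrongDual μ‖ * ‖WeakDual.toStrongDual ν‖)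
    (hc₁ : ∀ ν, Continuous fun μ => Φ μ ν)
    (hc₂ : ∀ μ, Continuous fun ν => Φ μ ν)
    (dX : X → WeakDual ℂ C₀(X, ℂ)) (hdX : ∀ x (g : C₀(X, ℂ)), dX x g = g x)
    (dY : Y → WeakDual ℂ C₀(Y, ℂ)) (hdY : ∀ y (g : C₀(Y, ℂ)), dY y g = g y) :
    IsSepC0 (fun p : X × Y => Φ (dX p.1) (dY p.2)) ∧
      (∀ (μ : WeakDual ℂ C₀(X, ℂ)) (ν : WeakDual ℂ C₀(Y, ℂ))
        (F : Y → C₀(X, ℂ)) (g : C₀(Y, ℂ)),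
          (∀ x y, F y x = Φ (dX x) (dY y)) → (∀ y, g y = μ (F y)) →
          Φ μ ν = ν g) ∧
      (∀ C : ℝ, 0 ≤ C →
        ((∀ μ ν, ‖Φ μ ν‖ ≤ C * ‖WeakDual.toStrongDual μ‖ * ‖WeakDual.toStrongDual ν‖) ↔
          ∀ p : X × Y, ‖Φ (dX p.1) (dY p.2)‖ ≤ C)) := by
  let B : WeakDual ℂ C₀(X, ℂ) →ₗ[ℂ] WeakDual ℂ C₀(Y, ℂ) →ₗ[ℂ] ℂ :=
    LinearMap.mk₂ ℂ Φ hadd₁ hsmul₁ hadd₂ hsmul₂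
  have hdirac {C : ℝ} (hC : ∀ μ ν, ‖B μ ν‖ ≤ C * ‖WeakDual.toStrongDual μ‖ *
      ‖WeakDual.toStrongDual ν‖) (p : X × Y) : ‖Φ (dX p.1) (dY p.2)‖ ≤ max C 0 :=
    WeakDual.norm_bilinear_apply_dirac_le_max hdX hdY hC p.1 p.2
  refine ⟨⟨?_, fun x => ?_, fun y => ?_⟩, fun μ ν F g hF hg => ?_,
    fun C hC => ⟨fun h p => ?_, fun h => ?_⟩⟩
  · obtain ⟨C, hC⟩ := hbdd
    exact ⟨max C 0, hdirac hC⟩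
  · exact WeakDual.exists_zeroAtInfty_eq_apply_dirac hdY (φ := B (dX x)) (hc₂ _)
  · exact WeakDual.exists_zeroAtInfty_eq_apply_dirac hdX (φ := B.flip (dY y)) (hc₁ _)
  · exact WeakDual.bilinear_apply_eq_iterated hc₁ hc₂ hdX hdY (B := B) hF hg ν
  · exact (hdirac h p).trans (max_eq_left hC).le
  · exact WeakDual.norm_bilinear_apply_le_of_forall_norm_apply_dirac_le (B := B) hc₁ hc₂ hdX hdY
      hC fun x y => h (x, y)

/-- Let `X`, `Y` be locally compact Hausdorff spaces, and let
`Φ : M(X) × M(Y) → ℂ` be a bounded bilinear map which is separately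
weak*-continuous (`M(X) = C₀(X, ℂ)*` with the weak* topology).  Let
`f(x, y) := Φ(δ_x, δ_y)` where `δ` denotes the Dirac measures (given as the
evaluation functionals `dX`, `dY`).  Then `f` is a bounded separately `C₀`
function, `Φ` is given by the iterated integral against `f`, and
`‖Φ‖ = sup_{x, y} |f(x, y)|` (expressed via coincidence of bounds). -/
theorem sepWeakStarBilinear_eq_integral
    {X Y : Type*} [TopologicalSpace X] [LocallyCompactSpace X] [T2Space X]
    [TopologicalSpace Y] [LocallyCompactSpace Y] [T2Space Y]
    (Φ : WeakDual ℂ C₀(X, ℂ) → WeakDual ℂ C₀(Y, ℂ) → ℂ)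
    (hadd₁ : ∀ μ₁ μ₂ ν, Φ (μ₁ + μ₂) ν = Φ μ₁ ν + Φ μ₂ ν)
    (hsmul₁ : ∀ (c : ℂ) μ ν, Φ (c • μ) ν = c * Φ μ ν)
    (hadd₂ : ∀ μ ν₁ ν₂, Φ μ (ν₁ + ν₂) = Φ μ ν₁ + Φ μ ν₂)
    (hsmul₂ : ∀ (c : ℂ) μ ν, Φ μ (c • ν) = c * Φ μ ν)
    (hbdd : ∃ C : ℝ, ∀ μ ν, ‖Φ μ ν‖ ≤
      C * ‖WeakDual.toStrongDual μ‖ * ‖WeakDual.toStrongDual ν‖)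
    (hc₁ : ∀ ν, Continuous fun μ => Φ μ ν)
    (hc₂ : ∀ μ, Continuous fun ν => Φ μ ν)
    (dX : X → WeakDual ℂ C₀(X, ℂ)) (hdX : ∀ x (g : C₀(X, ℂ)), dX x g = g x)
    (dY : Y → WeakDual ℂ C₀(Y, ℂ)) (hdY : ∀ y (g : C₀(Y, ℂ)), dY y g = g y) :
    IsSepC0 (fun p : X × Y => Φ (dX p.1) (dY p.2)) ∧
      (∀ (μ : WeakDual ℂ C₀(X, ℂ)) (ν : WeakDual ℂ C₀(Y, ℂ))
        (F : Y → C₀(X, ℂ)) (g : C₀(Y, ℂ)),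
          (∀ x y, F y x = Φ (dX x) (dY y)) → (∀ y, g y = μ (F y)) →
          Φ μ ν = ν g) ∧
      (∀ C : ℝ, 0 ≤ C →
        ((∀ μ ν, ‖Φ μ ν‖ ≤ C * ‖WeakDual.toStrongDual μ‖ * ‖WeakDual.toStrongDual ν‖) ↔
          ∀ p : X × Y, ‖Φ (dX p.1) (dY p.2)‖ ≤ C)) :=
  sepWeakStarBilinear_eq_integral_general Φ hadd₁ hsmul₁ hadd₂ hsmul₂ hbdd hc₁ hc₂ dX hdX dY hdY
end

section
/- Let G be a locally compact group and let Δ_* : C₀(G) → C_b(G × G) be given by (Δ_* f)(g,h) = f(gh). If G is not compact, then Δ_* C₀(G) ∩ C₀(G × G) = {0}. -/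
/-!
If `f x ≠ 0`, then `(g, h) ↦ f (g h)` takes the value `f x` at every point `(g, g⁻¹ x)`. These
points project onto all of `G`, whereas a function vanishing at infinity has modulus `≥ ‖f x‖`
only on a relatively compact set; hence `G` would be compact.
-/

open scoped ZeroAtInfty
open Filter

namespace ZeroAtInftyContinuousMap

variable {X E : Type*} [TopologicalSpace X] [NormedAddCommGroup E]

theorem exists_isCompact_superset_setOf_le_norm (F : C₀(X, E)) {ε : ℝ} (hε : 0 < ε) :
    ∃ K, IsCompact K ∧ {x | ε ≤ ‖F x‖} ⊆ K := by
  have hsmall : ∀ᶠ x in cocompact X, ‖F x‖ < ε := by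
    simpa using F.zero_at_infty'.norm.eventually_lt_const (by simpa using hε)
  obtain ⟨K, hK, hKsmall⟩ := mem_cocompact.mp hsmall
  refine ⟨K, hK, fun x (hx : ε ≤ ‖F x‖) => ?_⟩
  by_contra hxK
  exact (hKsmall hxK).not_ge hx

theorem compactSpace_of_apply_graph_eq {Y : Type*} [TopologicalSpace Y] (F : C₀(X × Y, E))
    (s : X → Y) {c : E} (hc : c ≠ 0) (hs : ∀ x, F (x, s x) = c) : CompactSpace X := by
  obtain ⟨K, hK, hlarge⟩ := F.exists_isCompact_superset_setOf_le_norm (norm_pos_iff.mpr hc)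
  have hproj : Set.univ ⊆ Prod.fst '' K := fun x _ =>
    ⟨(x, s x), hlarge (by simp [hs]), rfl⟩
  exact isCompact_univ_iff.mp ((hK.image continuous_fst).of_isClosed_subset isClosed_univ hproj)

end ZeroAtInftyContinuousMap

theorem comultiplication_range_inter_C0_eq_zero_general
    (G : Type*) [Group G] [TopologicalSpace G] (hG : ¬ CompactSpace G)
    (f : C₀(G, ℂ)) (F : C₀(G × G, ℂ)) (hF : ∀ g h : G, F (g, h) = f (g * h)) :
    f = 0 := by
  by_contra hf
  obtain ⟨x, hx⟩ : ∃ x, f x ≠ 0 := by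
    by_contra! h
    exact hf (ZeroAtInftyContinuousMap.ext h)
  exact hG (F.compactSpace_of_apply_graph_eq (fun g => g⁻¹ * x) hx fun g => by
    rw [hF, mul_inv_cancel_left])

/-- Let `G` be a locally compact group which is not compact,
and let `Δ_* : C₀(G) → C_b(G × G)` be given by `(Δ_* f)(g, h) = f (g h)`.
Then `Δ_* C₀(G) ∩ C₀(G × G) = {0}`: if the function `(g, h) ↦ f (g h)`
vanishes at infinity on `G × G` for some `f ∈ C₀(G)`, then `f = 0`. -/
theorem comultiplication_range_inter_C0_eq_zero
    (G : Type*) [Group G] [TopologicalSpace G] [IsTopologicalGroup G]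
    [LocallyCompactSpace G] [T2Space G] (hG : ¬ CompactSpace G)
    (f : C₀(G, ℂ)) (F : C₀(G × G, ℂ)) (hF : ∀ g h : G, F (g, h) = f (g * h)) :
    f = 0 :=
  comultiplication_range_inter_C0_eq_zero_general G hG f F hF
end
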